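/- Let S be a random variable taking values in the lattice {na + kl : k ∈ ℤ} (a ≥ 0, l > 0) with probability mass function p, mean 0 and variance s² > 0, and let S' = S/s. Let φ be the standard Gaussian density and define the quantized Gaussian mass function q((na+kl)/s) = ∫_{(na+kl)/s}^{(na+(k+1)l)/s} φ(x) dx. Then |D_KL(p_{S'} ‖ q) + H(S) − (1/2)log(2πe) − log(s/l)| ≤ l/s + l²/(2s²), where H(S) = −Σ_k p(na+kl) log p(na+kl) is the discrete Shannon entropy. -/

import Mathlib

/-- the standard Gaussian density -/
noncomputable def stdGaussianPDF (x : ℝ) : ℝ :=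
  (Real.sqrt (2 * Real.pi))⁻¹ * Real.exp (-(x ^ 2) / 2)

/-!
Write `x_k = (c + k l)/s` and `d = l/s`, so that `q k` is the Gaussian mass of `[x_k, x_k + d]`.
On that interval `log φ` moves by at most `d |x_k| + d²/2` away from `log φ(x_k)`, hence
`log q k = log d - ½ log 2π - x_k²/2 + e_k` with `|e_k| ≤ d |x_k| + d²/2`. Since
`D(p ‖ q) + H(S) = -∑ p_k log q_k` and `∑ p_k x_k² = 1`, the quantity in the absolute value is
`-∑ p_k e_k`, and `∑ p_k |x_k| ≤ (∑ p_k + ∑ p_k x_k²)/2 = 1` bounds it by `d + d²/2`.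
-/

open Real Set MeasureTheory

theorem abs_log_sub_log_le_iff {x y B : ℝ} (hx : 0 < x) (hy : 0 < y) :
    |log x - log y| ≤ B ↔ y * exp (-B) ≤ x ∧ x ≤ y * exp B := by
  have hupper : log x - log y ≤ B ↔ x ≤ y * exp B := by
    rw [← log_le_log_iff hx (by positivity), log_mul hy.ne' (exp_pos _).ne', log_exp]
    constructor <;> intro <;> linarith
  have hlower : log y - log x ≤ B ↔ y * exp (-B) ≤ x := by
    rw [← log_le_log_iff (by positivity) hx, log_mul hy.ne' (exp_pos _).ne', log_exp]
    constructor <;> intro <;> linarith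
  rw [abs_sub_le_iff, hupper, hlower, and_comm]

theorem abs_log_integral_sub_log_le {f : ℝ → ℝ} {a b c B : ℝ} (hab : a < b) (hc : 0 < c)
    (hf : IntervalIntegrable f volume a b)
    (hbound : ∀ t ∈ Icc a b, 0 < f t ∧ |log (f t) - log c| ≤ B) :
    |log (∫ t in a..b, f t) - log ((b - a) * c)| ≤ B := by
  have hpointwise (t : ℝ) (ht : t ∈ Icc a b) : c * exp (-B) ≤ f t ∧ f t ≤ c * exp B :=
    (abs_log_sub_log_le_iff (hbound t ht).1 hc).1 (hbound t ht).2
  have hpos : 0 < ∫ t in a..b, f t :=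
    intervalIntegral.intervalIntegral_pos_of_pos_on hf
      (fun t ht => (hbound t (Ioo_subset_Icc_self ht)).1) hab
  rw [abs_log_sub_log_le_iff hpos (mul_pos (sub_pos.2 hab) hc)]
  constructor
  · calc (b - a) * c * exp (-B) = ∫ _ in a..b, c * exp (-B) := by
          rw [intervalIntegral.integral_const, smul_eq_mul, mul_assoc]
      _ ≤ ∫ t in a..b, f t :=
        intervalIntegral.integral_mono_on hab.le intervalIntegrable_const hf
          fun t ht => (hpointwise t ht).1
  · calc ∫ t in a..b, f t ≤ ∫ _ in a..b, c * exp B :=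
        intervalIntegral.integral_mono_on hab.le hf intervalIntegrable_const
          fun t ht => (hpointwise t ht).2
      _ = (b - a) * c * exp B := by
          rw [intervalIntegral.integral_const, smul_eq_mul, mul_assoc]

theorem abs_sq_sub_sq_le_of_mem_Icc {a d t : ℝ} (ht : t ∈ Icc a (a + d)) :
    |t ^ 2 - a ^ 2| ≤ 2 * d * |a| + d ^ 2 := by
  have hta : |t - a| ≤ d := by rw [abs_le]; constructor <;> linarith [ht.1, ht.2]
  calc |t ^ 2 - a ^ 2| = |t - a| * |(t - a) + 2 * a| := by rw [← abs_mul]; ring_nf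
    _ ≤ d * (d + 2 * |a|) := by
      gcongr
      · exact le_trans (abs_nonneg _) hta
      · calc |(t - a) + 2 * a| ≤ |t - a| + |2 * a| := abs_add_le _ _
          _ ≤ d + 2 * |a| := by rw [abs_mul, abs_two]; linarith
    _ = 2 * d * |a| + d ^ 2 := by ring

theorem stdGaussianPDF_pos (x : ℝ) : 0 < stdGaussianPDF x := by
  unfold stdGaussianPDF
  positivity

theorem continuous_stdGaussianPDF : Continuous stdGaussianPDF := by
  unfold stdGaussianPDF
  fun_prop

theorem log_stdGaussianPDF (x : ℝ) :
    log (stdGaussianPDF x) = -(1 / 2) * log (2 * π) - x ^ 2 / 2 := by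
  unfold stdGaussianPDF
  rw [log_mul (by positivity) (exp_pos _).ne', log_inv, log_sqrt (by positivity), log_exp]
  ring

theorem integral_stdGaussianPDF_pos {a b : ℝ} (hab : a < b) :
    0 < ∫ t in a..b, stdGaussianPDF t :=
  intervalIntegral.intervalIntegral_pos_of_pos_on
    (continuous_stdGaussianPDF.intervalIntegrable a b) (fun t _ => stdGaussianPDF_pos t) hab

theorem abs_log_stdGaussianPDF_sub_le_of_mem_Icc {a d t : ℝ} (ht : t ∈ Icc a (a + d)) :
    |log (stdGaussianPDF t) - log (stdGaussianPDF a)| ≤ d * |a| + d ^ 2 / 2 := by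
  have hdiff : log (stdGaussianPDF t) - log (stdGaussianPDF a) = -(t ^ 2 - a ^ 2) / 2 := by
    rw [log_stdGaussianPDF, log_stdGaussianPDF]; ring
  rw [hdiff, abs_div, abs_neg, abs_two]
  linarith [abs_sq_sub_sq_le_of_mem_Icc ht]

theorem abs_log_integral_stdGaussianPDF_sub_le (a : ℝ) {d : ℝ} (hd : 0 < d) :
    |log (∫ t in a..a + d, stdGaussianPDF t) - (log d - (1 / 2) * log (2 * π) - a ^ 2 / 2)|
      ≤ d * |a| + d ^ 2 / 2 := by
  have hlog_int :
      |log (∫ t in a..a + d, stdGaussianPDF t) - log ((a + d - a) * stdGaussianPDF a)|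
        ≤ d * |a| + d ^ 2 / 2 :=
    abs_log_integral_sub_log_le (by linarith) (stdGaussianPDF_pos a)
      (continuous_stdGaussianPDF.intervalIntegrable _ _)
      fun t ht => ⟨stdGaussianPDF_pos t, abs_log_stdGaussianPDF_sub_le_of_mem_Icc ht⟩
  rw [add_sub_cancel_left, log_mul hd.ne' (stdGaussianPDF_pos a).ne', log_stdGaussianPDF]
    at hlog_int
  convert hlog_int using 3
  ring

section WeightedSums

variable {ι : Type*} {p x : ι → ℝ}

theorem summable_mul_abs_and_tsum_le_one (hp : ∀ i, 0 ≤ p i) (h₁ : HasSum p 1)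
    (h₂ : HasSum (fun i => p i * x i ^ 2) 1) :
    Summable (fun i => p i * |x i|) ∧ ∑' i, p i * |x i| ≤ 1 := by
  have hamgm (i : ι) : p i * |x i| ≤ (p i + p i * x i ^ 2) / 2 := by
    nlinarith [hp i, mul_nonneg (hp i) (sq_nonneg (|x i| - 1)), sq_abs (x i)]
  have hmajor : HasSum (fun i => (p i + p i * x i ^ 2) / 2) 1 := by
    simpa using (h₁.add h₂).div_const 2
  have hsummable : Summable (fun i => p i * |x i|) :=
    hmajor.summable.of_nonneg_of_le (fun i => mul_nonneg (hp i) (abs_nonneg _)) hamgm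
  exact ⟨hsummable, hmajor.tsum_eq ▸ hsummable.tsum_le_tsum hamgm hmajor.summable⟩

theorem summable_mul_and_abs_tsum_mul_sub_le {y : ι → ℝ} {K d : ℝ} (hd : 0 ≤ d)
    (hp : ∀ i, 0 ≤ p i) (h₁ : HasSum p 1) (h₂ : HasSum (fun i => p i * x i ^ 2) 1)
    (hy : ∀ i, |y i - (K - x i ^ 2 / 2)| ≤ d * |x i| + d ^ 2 / 2) :
    Summable (fun i => p i * y i) ∧ |∑' i, p i * y i - (K - 1 / 2)| ≤ d + d ^ 2 / 2 := by
  set e : ι → ℝ := fun i => y i - (K - x i ^ 2 / 2)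
  obtain ⟨habs, habs_le⟩ := summable_mul_abs_and_tsum_le_one hp h₁ h₂
  have hmajor : HasSum (fun i => p i * (d * |x i| + d ^ 2 / 2))
      ((∑' i, p i * |x i|) * d + d ^ 2 / 2) := by
    have h := (habs.hasSum.mul_right d).add (h₁.mul_right (d ^ 2 / 2))
    rw [one_mul] at h
    exact h.congr_fun fun i => by ring
  have hdom (i : ι) : ‖p i * e i‖ ≤ p i * (d * |x i| + d ^ 2 / 2) := by
    rw [Real.norm_eq_abs, abs_mul, abs_of_nonneg (hp i)]
    exact mul_le_mul_of_nonneg_left (hy i) (hp i)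
  have he : Summable (fun i => p i * e i) := .of_norm_bounded hmajor.summable hdom
  have hquad : HasSum (fun i => p i * (K - x i ^ 2 / 2)) (K - 1 / 2) := by
    have h := (h₁.mul_right K).sub (h₂.div_const 2)
    rw [one_mul] at h
    exact h.congr_fun fun i => by ring
  have hy_sum : HasSum (fun i => p i * y i) (K - 1 / 2 + ∑' i, p i * e i) :=
    (hquad.add he.hasSum).congr_fun fun i => by simp only [e]; ring
  refine ⟨hy_sum.summable, ?_⟩
  calc |∑' i, p i * y i - (K - 1 / 2)| = ‖∑' i, p i * e i‖ := by
        rw [hy_sum.tsum_eq, Real.norm_eq_abs]; ring_nf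
    _ ≤ ∑' i, p i * (d * |x i| + d ^ 2 / 2) := tsum_of_norm_bounded hmajor.summable.hasSum hdom
    _ ≤ d + d ^ 2 / 2 := by rw [hmajor.tsum_eq]; nlinarith

theorem tsum_mul_log_div_eq {q : ι → ℝ} (hq : ∀ i, q i ≠ 0)
    (hpq : Summable fun i => p i * log (p i / q i)) (hlog_q : Summable fun i => p i * log (q i)) :
    ∑' i, p i * log (p i / q i) = ∑' i, p i * log (p i) - ∑' i, p i * log (q i) := by
  have hsplit (i : ι) : p i * log (p i / q i) = p i * log (p i) - p i * log (q i) := by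
    rcases eq_or_ne (p i) 0 with h | h
    · simp [h]
    · rw [log_div h (hq i)]; ring
  have hlog_p : Summable fun i => p i * log (p i) :=
    (hpq.add hlog_q).congr fun i => by rw [hsplit]; ring
  rw [← hlog_p.tsum_sub hlog_q]
  exact tsum_congr hsplit

end WeightedSums

theorem lattice_entropy_KL_comparison_general (c l s : ℝ) (hl : 0 < l) (hs : 0 < s)
    (p : ℤ → ℝ) (hp : ∀ k, 0 ≤ p k) (hsum : HasSum p 1)
    (hvar : HasSum (fun k : ℤ => p k * (c + k * l) ^ 2) (s ^ 2))
    (q : ℤ → ℝ)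
    (hq : ∀ k : ℤ, q k = ∫ x in ((c + k * l) / s)..((c + (k + 1) * l) / s), stdGaussianPDF x)
    (hkl : Summable (fun k : ℤ => p k * Real.log (p k / q k))) :
    |(∑' k : ℤ, p k * Real.log (p k / q k)) + (-∑' k : ℤ, p k * Real.log (p k))
        - (1 / 2) * Real.log (2 * Real.pi * Real.exp 1) - Real.log (s / l)|
      ≤ l / s + l ^ 2 / (2 * s ^ 2) := by
  set d := l / s
  have hd : 0 < d := div_pos hl hs
  set x : ℤ → ℝ := fun k => (c + k * l) / s
  have hq' (k : ℤ) : q k = ∫ t in x k..x k + d, stdGaussianPDF t := by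
    rw [hq k]; congr 1; simp only [x, d]; field_simp; ring
  have hx : HasSum (fun k => p k * x k ^ 2) 1 := by
    have h := hvar.div_const (s ^ 2)
    rw [div_self (by positivity)] at h
    exact h.congr_fun fun k => by simp only [x]; field_simp
  obtain ⟨hlog_q, hbound⟩ := summable_mul_and_abs_tsum_mul_sub_le hd.le hp hsum hx fun k =>
    hq' k ▸ abs_log_integral_stdGaussianPDF_sub_le (x k) hd
  have hq_ne (k : ℤ) : q k ≠ 0 := (hq' k ▸ integral_stdGaussianPDF_pos (by linarith)).ne'
  have hconst : (1 / 2) * log (2 * π * exp 1) + log (s / l)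
      = -(log d - (1 / 2) * log (2 * π) - 1 / 2) := by
    rw [log_mul (by positivity) (exp_pos _).ne', log_exp, log_div hl.ne' hs.ne',
      log_div hs.ne' hl.ne']
    ring
  calc _ = |∑' k, p k * log (q k) - (log d - (1 / 2) * log (2 * π) - 1 / 2)| := by
        rw [tsum_mul_log_div_eq hq_ne hkl hlog_q, ← abs_neg]; congr 1; linarith
    _ ≤ d + d ^ 2 / 2 := hbound
    _ = l / s + l ^ 2 / (2 * s ^ 2) := by simp only [d]; field_simp

/-- For a mean-zero random variable `S` on the lattice `{c + kl : k ∈ ℤ}`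
with pmf `p`, variance `s² > 0`, and the quantized Gaussian `q`,
`|D_KL(p_{S'} ‖ q) + H(S) − (1/2)log(2πe) − log(s/l)| ≤ l/s + l²/(2s²)`. -/
theorem lattice_entropy_KL_comparison (c l s : ℝ) (hc : 0 ≤ c) (hl : 0 < l) (hs : 0 < s)
    (p : ℤ → ℝ) (hp : ∀ k, 0 ≤ p k) (hsum : HasSum p 1)
    (hmean : HasSum (fun k : ℤ => p k * (c + k * l)) 0)
    (hvar : HasSum (fun k : ℤ => p k * (c + k * l) ^ 2) (s ^ 2))
    (q : ℤ → ℝ)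
    (hq : ∀ k : ℤ, q k = ∫ x in ((c + k * l) / s)..((c + (k + 1) * l) / s), stdGaussianPDF x)
    (hent : Summable (fun k : ℤ => p k * Real.log (p k)))
    (hkl : Summable (fun k : ℤ => p k * Real.log (p k / q k))) :
    |(∑' k : ℤ, p k * Real.log (p k / q k)) + (-∑' k : ℤ, p k * Real.log (p k))
        - (1 / 2) * Real.log (2 * Real.pi * Real.exp 1) - Real.log (s / l)|
      ≤ l / s + l ^ 2 / (2 * s ^ 2) :=
  lattice_entropy_KL_comparison_general c l s hl hs p hp hsum hvar q hq hkl
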